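/- For a trajectory undergoing an impulsive force at a point y (i.e., piecewise inertial motion x → y → z with equal time steps), the area of the triangle formed by the actual displacement in the second interval equals the area of the triangle that would be swept by unperturbed inertial motion, whenever the impulse (change of momentum) is directed along the line from the force center to y. Formally: if z = 2y − x + w with w parallel to y (force center at origin), then the triangles (0, x, y) and (0, y, z) have equal area. -/

import Mathlib

/-- Twice the area of the triangle (0, a, b) in ℝ², up to sign: the cross product. -/
def cross2 (a b : ℝ × ℝ) : ℝ := a.1 * b.2 - a.2 * b.1

theorem cross2_swap (a b : ℝ × ℝ) : cross2 b a = -cross2 a b := by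
  unfold cross2; ring

theorem cross2_neg_right (a b : ℝ × ℝ) : cross2 a (-b) = -cross2 a b := by
  simp only [cross2, Prod.fst_neg, Prod.snd_neg]; ring

theorem cross2_add_smul_self_right (a b : ℝ × ℝ) (c : ℝ) :
    cross2 a (b + c • a) = cross2 a b := by
  simp only [cross2, Prod.fst_add, Prod.snd_add, Prod.smul_fst, Prod.smul_snd, smul_eq_mul]
  ring

theorem equal_areas_impulse (x y z : ℝ × ℝ) (lam : ℝ)
    (hz : z = (2 : ℝ) • y - x + lam • y) :
    |cross2 x y| / 2 = |cross2 y z| / 2 := by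
  have hz' : z = -x + (2 + lam) • y := by
    rw [hz, add_smul]; abel
  rw [hz', cross2_add_smul_self_right, cross2_neg_right, cross2_swap x y, neg_neg]
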